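/- For a positive function V in H^{3/2}(T), the operator A[V](w) := V w - (V/P_0(V)) P_0(V w), acting on mean-zero functions, is a two-sided inverse of the operator w ↦ (1-P_0)(V^{-1} w) on mean-zero functions. -/

import Mathlib

/-!
Writing `k = P₀(V w) / P₀(V)`, one has `A[V] w = V (w - k)`, so `V⁻¹ A[V] w` differs from `w` by a
constant, which `1 - P₀` removes. Conversely, for `u = V⁻¹ w - c` the product `V u = w - c V` has
mean `-c P₀(V)` when `P₀ w = 0`, and the correction term of `A[V]` adds back exactly `c V`.
-/

/-- The mean `P₀ g = (1/2π) ∫₀^{2π} g` of a `2π`-periodic function. -/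
noncomputable def meanT (g : ℝ → ℝ) : ℝ :=
  (1 / (2 * Real.pi)) * ∫ x in (0:ℝ)..(2 * Real.pi), g x

/-- The operator `A[V] w = V w - (V / P₀(V)) P₀(V w)`. -/
noncomputable def Aop (V w : ℝ → ℝ) : ℝ → ℝ :=
  fun x => V x * w x - (V x / meanT V) * meanT (fun y => V y * w y)

open MeasureTheory

section meanT

variable {f g : ℝ → ℝ}

lemma meanT_sub (hf : IntervalIntegrable f volume 0 (2 * Real.pi))
    (hg : IntervalIntegrable g volume 0 (2 * Real.pi)) :
    meanT (fun x => f x - g x) = meanT f - meanT g := by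
  simp only [meanT, intervalIntegral.integral_sub hf hg, mul_sub]

lemma meanT_const_mul (c : ℝ) (f : ℝ → ℝ) : meanT (fun x => c * f x) = c * meanT f := by
  simp only [meanT, intervalIntegral.integral_const_mul]
  ring

lemma meanT_const (c : ℝ) : meanT (fun _ => c) = c := by
  simp only [meanT, intervalIntegral.integral_const, smul_eq_mul]
  field_simp [Real.pi_ne_zero]
  ring

lemma meanT_sub_const (hf : IntervalIntegrable f volume 0 (2 * Real.pi)) (c : ℝ) :
    meanT (fun x => f x - c) = meanT f - c := by
  rw [meanT_sub hf intervalIntegrable_const, meanT_const]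

lemma meanT_pos (hf : IntervalIntegrable f volume 0 (2 * Real.pi)) (hpos : ∀ x, 0 < f x) :
    0 < meanT f :=
  mul_pos (by positivity)
    (intervalIntegral.intervalIntegral_pos_of_pos_on hf (fun x _ => hpos x) (by positivity))

end meanT

section Aop

variable {V w : ℝ → ℝ}

lemma Aop_div_eq_sub_const {x : ℝ} (hVx : V x ≠ 0) :
    Aop V w x / V x = w x - meanT (fun y => V y * w y) / meanT V := by
  simp only [Aop]
  field_simp

lemma Aop_apply_div_sub_const (hVne : ∀ x, V x ≠ 0) (hmV : meanT V ≠ 0)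
    (hV : IntervalIntegrable V volume 0 (2 * Real.pi))
    (hw : IntervalIntegrable w volume 0 (2 * Real.pi)) (c x : ℝ) :
    Aop V (fun y => w y / V y - c) x = w x - V x / meanT V * meanT w := by
  have hprod : (fun y => V y * (w y / V y - c)) = fun y => w y - c * V y := by
    funext y
    field_simp [hVne y]
  have hmean : meanT (fun y => V y * (w y / V y - c)) = meanT w - c * meanT V := by
    rw [hprod, meanT_sub hw (hV.const_mul c), meanT_const_mul]
  simp only [Aop, hmean]
  field_simp [hVne x]
  ring

lemma Aop_div_sub_meanT (hVne : ∀ x, V x ≠ 0)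
    (hw : IntervalIntegrable w volume 0 (2 * Real.pi)) (x : ℝ) :
    Aop V w x / V x - meanT (fun y => Aop V w y / V y) = w x - meanT w := by
  have hdiv : (fun y => Aop V w y / V y) = fun y => w y - meanT (fun y => V y * w y) / meanT V :=
    funext fun y => Aop_div_eq_sub_const (hVne y)
  rw [hdiv, meanT_sub_const hw, Aop_div_eq_sub_const (hVne x)]
  ring

end Aop

theorem Aop_inverts_one_sub_mean_inv_mul_general
    (V : ℝ → ℝ) (hV : Continuous V)
    (hVpos : ∀ x, 0 < V x)
    (w : ℝ → ℝ) (hw : Continuous w)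
    (hwmean : meanT w = 0) :
    (∀ x, Aop V (fun y => w y / V y - meanT (fun z => w z / V z)) x = w x) ∧
    (∀ x, Aop V w x / V x - meanT (fun y => Aop V w y / V y) = w x) := by
  have hVne : ∀ x, V x ≠ 0 := fun x => (hVpos x).ne'
  have hmV : meanT V ≠ 0 := (meanT_pos (hV.intervalIntegrable _ _) hVpos).ne'
  refine ⟨fun x => ?_, fun x => ?_⟩
  · rw [Aop_apply_div_sub_const hVne hmV (hV.intervalIntegrable _ _) (hw.intervalIntegrable _ _),
      hwmean, mul_zero, sub_zero]
  · rw [Aop_div_sub_meanT hVne (hw.intervalIntegrable _ _), hwmean, sub_zero]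

/-- For a positive periodic `V` (in `H^{3/2}(𝕋)`, in particular continuous), the operator
`A[V]` is a two-sided inverse of `w ↦ (1 - P₀)(V⁻¹ w)` on mean-zero functions. -/
theorem Aop_inverts_one_sub_mean_inv_mul
    (V : ℝ → ℝ) (hV : Continuous V)
    (hVper : ∀ x, V (x + 2 * Real.pi) = V x)
    (hVpos : ∀ x, 0 < V x)
    (w : ℝ → ℝ) (hw : Continuous w)
    (hwper : ∀ x, w (x + 2 * Real.pi) = w x)
    (hwmean : meanT w = 0) :
    (∀ x, Aop V (fun y => w y / V y - meanT (fun z => w z / V z)) x = w x) ∧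
    (∀ x, Aop V w x / V x - meanT (fun y => Aop V w y / V y) = w x) :=
  Aop_inverts_one_sub_mean_inv_mul_general V hV hVpos w hw hwmean
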